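/- arXiv:math/0410327 — 4 statements merged into one kernel-verified Lean document; each statement's English description precedes it below -/
import Mathlib

section
/- For every integer n ≥ 2, the coefficient of q^3 in the series Σ_{d≥0} (q^d/(d!)^n) · ((−1)^d/2) · Σ_{m=0}^{d} C(d,m)^n · (n(d−2m)(γ(m)−γ(d−m)) + 2) equals (11n − 4 + (n−4)·3^n) / (2·6^n). In particular it equals 49/2592 for n = 5 and 95/5832 for n = 6. -/
def gam (m : ℕ) : ℚ := ∑ j ∈ Finset.range m, 1 / ((j : ℚ) + 1)

def Icoeff (n d : ℕ) : ℚ :=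
  (1 / ((Nat.factorial d : ℚ)) ^ n) * ((-1 : ℚ) ^ d / 2) *
    ∑ m ∈ Finset.range (d + 1),
      (Nat.choose d m : ℚ) ^ n *
        ((n : ℚ) * ((d : ℚ) - 2 * (m : ℚ)) * (gam m - gam (d - m)) + 2)

lemma key (n : ℕ) :
    Icoeff n 3 = (11 * (n : ℚ) - 4 + ((n : ℚ) - 4) * 3 ^ n) / (2 * 6 ^ n) := by
  have h6 : ((6 : ℚ)) ^ n ≠ 0 := by positivity
  have h3 : ((3 : ℚ)) ^ n ≠ 0 := by positivity
  have h63 : (6 : ℚ) ^ n = 2 ^ n * 3 ^ n := by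
    rw [← mul_pow]; norm_num
  simp only [Icoeff, gam, Finset.sum_range_succ, Finset.sum_range_zero,
    Nat.factorial, Nat.choose]
  norm_num
  field_simp
  ring_nf
lemma k5 : Icoeff 5 3 = 49 / 2592 := by rw [key]; norm_num
lemma k6 : Icoeff 6 3 = 95 / 5832 := by rw [key]; norm_num

theorem coeff_q3 :
    (∀ n : ℕ, 2 ≤ n →
      Icoeff n 3 = (11 * (n : ℚ) - 4 + ((n : ℚ) - 4) * 3 ^ n) / (2 * 6 ^ n)) ∧
    Icoeff 5 3 = 49 / 2592 ∧ Icoeff 6 3 = 95 / 5832 := by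
  exact ⟨fun n _ => key n, k5, k6⟩
end

section
/- For every integer n ≥ 2, the coefficient of q^4 in the series Σ_{d≥0} (q^d/(d!)^n) · ((−1)^d/2) · Σ_{m=0}^{d} C(d,m)^n · (n(d−2m)(γ(m)−γ(d−m)) + 2) equals ((6 − 25n)/3 + 4^n·(6 − 5n)/3 + 6^n) / 24^n. In particular it equals 139/884736 for n = 5 and 865/11943936 for n = 6. -/
lemma main (n : ℕ) :
    Icoeff n 4 =
      ((6 - 25 * (n : ℚ)) / 3 + (4 : ℚ) ^ n * (6 - 5 * (n : ℚ)) / 3 + 6 ^ n) / 24 ^ n := by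
  simp only [Icoeff, gam, Finset.sum_range_succ, Finset.sum_range_zero]
  norm_num [Nat.factorial, show Nat.choose 4 2 = 6 from rfl]
  ring

theorem coeff_q4 :
    (∀ n : ℕ, 2 ≤ n →
      Icoeff n 4 =
        ((6 - 25 * (n : ℚ)) / 3 + (4 : ℚ) ^ n * (6 - 5 * (n : ℚ)) / 3 + 6 ^ n) / 24 ^ n) ∧
    Icoeff 5 4 = 139 / 884736 ∧ Icoeff 6 4 = 865 / 11943936 := by
  refine ⟨fun n _ => main n, ?_, ?_⟩ <;> rw [main] <;> norm_num
end

section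
/- The rational numbers a_{01} = 64, a_{11} = 5, a_{02} = 924, a_{12} = 140, a_{03} = 5936 satisfy the following system of equations: a_{11} = 5; a_{01}/4 = 16; a_{11}·a_{01}/18 + a_{02}/27 = 52; a_{01}²/64 + a_{11}²·a_{01}/96 + 7·a_{11}·a_{02}/576 + a_{01}·a_{12}/128 + a_{03}/256 = 230; a_{11}²/4 + a_{12}/8 − a_{01}/4 = 31/4; 5·a_{11}·a_{01}/108 + a_{11}³/18 + a_{11}·a_{12}/12 − 2·a_{02}/81 = 1031/18; and 13·a_{11}²·a_{01}/576 + 17·a_{11}·a_{02}/1728 − a_{03}/256 − 3·a_{01}²/128 + a_{11}⁴/96 + a_{12}²/256 + a_{11}²·a_{12}/32 = 14863/96. -/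
theorem counting_matrix_V14 :
    ∀ a01 a11 a02 a12 a03 : ℚ,
      a01 = 64 → a11 = 5 → a02 = 924 → a12 = 140 → a03 = 5936 →
      a11 = 5 ∧
      a01 / 4 = 16 ∧
      a11 * a01 / 18 + a02 / 27 = 52 ∧
      a01 ^ 2 / 64 + a11 ^ 2 * a01 / 96 + 7 * a11 * a02 / 576 + a01 * a12 / 128 +
          a03 / 256 = 230 ∧
      a11 ^ 2 / 4 + a12 / 8 - a01 / 4 = 31 / 4 ∧
      5 * a11 * a01 / 108 + a11 ^ 3 / 18 + a11 * a12 / 12 - 2 * a02 / 81 = 1031 / 18 ∧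
      13 * a11 ^ 2 * a01 / 576 + 17 * a11 * a02 / 1728 - a03 / 256 - 3 * a01 ^ 2 / 128 +
          a11 ^ 4 / 96 + a12 ^ 2 / 256 + a11 ^ 2 * a12 / 32 = 14863 / 96 := by
  intros; subst_vars; norm_num
end

section
/- Let c_0 = 1, c_1 = 3, c_2 = 19/32, c_3 = 49/2592, c_4 = 139/884736 and let v_0 = 1, v_1 = 0, v_2 = 39, v_3 = 220, v_4 = 6291/4. Then for each 0 ≤ d ≤ 4, the coefficient of q^d in the product (Σ_{k≥0} 6^k q^k / k!)·(Σ_{d} v_d q^d) equals (d!)²·(2d)!·c_d. -/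
/-- Constant-term coefficients of the `I`-series of `G(2,5)`. -/
def cG25 : ℕ → ℚ
  | 0 => 1 | 1 => 3 | 2 => 19 / 32 | 3 => 49 / 2592 | 4 => 139 / 884736 | _ => 0

/-- Constant-term coefficients of the `I`-series of `V₁₀`. -/
def vV10 : ℕ → ℚ
  | 0 => 1 | 1 => 0 | 2 => 39 | 3 => 220 | 4 => 6291 / 4 | _ => 0

theorem quantum_lefschetz_V10 :
    ∀ d : ℕ, d ≤ 4 →
      (∑ i ∈ Finset.range (d + 1), (6 : ℚ) ^ i / (Nat.factorial i : ℚ) * vV10 (d - i)) =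
        (Nat.factorial d : ℚ) ^ 2 * (Nat.factorial (2 * d) : ℚ) * cG25 d := by
  intro d hd
  interval_cases d <;> simp [Finset.sum_range_succ, cG25, vV10, Nat.factorial] <;> norm_num
end
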